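/- arXiv:2305.03796 — 3 statements merged into one kernel-verified Lean document; each statement's English description precedes it below -/
import Mathlib

section
/- There exists a two-layer ReLU network computing the product of two binary matrices: for every n ≥ 1, there exist matrices W¹ ∈ {0,1}^{2n²×n³}, W² ∈ {0,1}^{n³×n²} and a bias vector such that for all A, B ∈ {0,1}^{n×n}, ReLU(flat([A,B])·W¹ − 𝟙_{n³}ᵀ)·W² = flat(A·B), where flat flattens a matrix row-major into a vector and [A,B] denotes concatenation of the flattened matrices. -/
/-- Row-major flattening index: entry `(i,j)` of an `n × n` matrix. -/
def flatIdx (n : ℕ) (i j : Fin n) : Fin (n ^ 2) :=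
  ⟨i.val * n + j.val, by have hi := i.isLt; have hj := j.isLt; nlinarith⟩

/-- Index of `A i j` inside the concatenation `[flat A, flat B]` (first half). -/
def catIdxA (n : ℕ) (i j : Fin n) : Fin (2 * n ^ 2) :=
  ⟨i.val * n + j.val, by have hi := i.isLt; have hj := j.isLt; nlinarith⟩

/-- Index of `B i j` inside the concatenation `[flat A, flat B]` (second half). -/
def catIdxB (n : ℕ) (i j : Fin n) : Fin (2 * n ^ 2) :=
  ⟨n ^ 2 + (i.val * n + j.val), by have hi := i.isLt; have hj := j.isLt; nlinarith⟩

/-- Index of the triple `(i,j,k)` inside a length-`n³` vector. -/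
def tripIdx (n : ℕ) (i j k : Fin n) : Fin (n ^ 3) :=
  ⟨i.val * n ^ 2 + j.val * n + k.val, by
    have hi := i.isLt; have hj := j.isLt; have hk := k.isLt; nlinarith⟩

lemma fin_pos3 {n : ℕ} (z : Fin (n ^ 3)) : 0 < n := by
  rcases Nat.eq_zero_or_pos n with h | h
  · exfalso; have := z.isLt; simp [h] at this
  · exact h

def eA (n : ℕ) (z : Fin (n ^ 3)) : Fin (2 * n ^ 2) :=
  ⟨(z.val / n ^ 2) * n + z.val % n, by
    have hn := fin_pos3 z
    have h1 : z.val / n ^ 2 < n := Nat.div_lt_of_lt_mul (lt_of_lt_of_le z.isLt (le_of_eq (by ring)))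
    have h2 : z.val % n < n := Nat.mod_lt _ hn
    nlinarith⟩

def eB (n : ℕ) (z : Fin (n ^ 3)) : Fin (2 * n ^ 2) :=
  ⟨n ^ 2 + ((z.val % n) * n + (z.val % n ^ 2) / n), by
    have hn := fin_pos3 z
    have h1 : z.val % n < n := Nat.mod_lt _ hn
    have h2 : (z.val % n ^ 2) / n < n := Nat.div_lt_of_lt_mul (by
      have : z.val % n ^ 2 < n ^ 2 := Nat.mod_lt _ (by positivity); nlinarith)
    nlinarith⟩

def fc (n : ℕ) (z : Fin (n ^ 3)) : Fin (n ^ 2) :=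
  ⟨(z.val / n ^ 2) * n + (z.val % n ^ 2) / n, by
    have hn := fin_pos3 z
    have h1 : z.val / n ^ 2 < n := Nat.div_lt_of_lt_mul (lt_of_lt_of_le z.isLt (le_of_eq (by ring)))
    have h2 : (z.val % n ^ 2) / n < n := Nat.div_lt_of_lt_mul (by
      have : z.val % n ^ 2 < n ^ 2 := Nat.mod_lt _ (by positivity); nlinarith)
    nlinarith⟩

lemma dec_div2 {n : ℕ} (i j k : Fin n) :
    (i.val * n ^ 2 + j.val * n + k.val) / n ^ 2 = i.val := by
  have hn : 0 < n := i.pos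
  have hr : j.val * n + k.val < n ^ 2 := by nlinarith [j.isLt, k.isLt]
  have he : i.val * n ^ 2 + j.val * n + k.val = (j.val * n + k.val) + i.val * n ^ 2 := by ring
  rw [he, Nat.add_mul_div_right _ _ (by positivity : 0 < n ^ 2), Nat.div_eq_of_lt hr, Nat.zero_add]

lemma dec_mod2 {n : ℕ} (i j k : Fin n) :
    (i.val * n ^ 2 + j.val * n + k.val) % n ^ 2 = j.val * n + k.val := by
  have hr : j.val * n + k.val < n ^ 2 := by nlinarith [j.isLt, k.isLt]
  have he : i.val * n ^ 2 + j.val * n + k.val = (j.val * n + k.val) + i.val * n ^ 2 := by ring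
  rw [he, Nat.add_mul_mod_self_right, Nat.mod_eq_of_lt hr]

lemma dec_mod1 {n : ℕ} (i j k : Fin n) :
    (i.val * n ^ 2 + j.val * n + k.val) % n = k.val := by
  have he : i.val * n ^ 2 + j.val * n + k.val = k.val + (i.val * n + j.val) * n := by ring
  rw [he, Nat.add_mul_mod_self_right, Nat.mod_eq_of_lt k.isLt]

lemma dec_div1 {n : ℕ} (j k : Fin n) : (j.val * n + k.val) / n = j.val := by
  have hn : 0 < n := j.pos
  have he : j.val * n + k.val = k.val + j.val * n := by ring
  rw [he, Nat.add_mul_div_right _ _ hn, Nat.div_eq_of_lt k.isLt, Nat.zero_add]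

lemma eA_trip {n : ℕ} (i j k : Fin n) : eA n (tripIdx n i j k) = catIdxA n i k := by
  apply Fin.ext
  show ((tripIdx n i j k).val / n ^ 2) * n + (tripIdx n i j k).val % n = i.val * n + k.val
  have h1 : (tripIdx n i j k).val = i.val * n ^ 2 + j.val * n + k.val := rfl
  rw [h1, dec_div2, dec_mod1]

lemma eB_trip {n : ℕ} (i j k : Fin n) : eB n (tripIdx n i j k) = catIdxB n k j := by
  apply Fin.ext
  show n ^ 2 + (((tripIdx n i j k).val % n) * n + ((tripIdx n i j k).val % n ^ 2) / n)
      = n ^ 2 + (k.val * n + j.val)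
  have h1 : (tripIdx n i j k).val = i.val * n ^ 2 + j.val * n + k.val := rfl
  rw [h1, dec_mod1, dec_mod2, dec_div1]

lemma fc_trip {n : ℕ} (i j k : Fin n) : fc n (tripIdx n i j k) = flatIdx n i j := by
  apply Fin.ext
  show ((tripIdx n i j k).val / n ^ 2) * n + ((tripIdx n i j k).val % n ^ 2) / n
      = i.val * n + j.val
  have h1 : (tripIdx n i j k).val = i.val * n ^ 2 + j.val * n + k.val := rfl
  rw [h1, dec_div2, dec_mod2, dec_div1]

lemma flatIdx_inj {n : ℕ} {i j i' j' : Fin n} (h : flatIdx n i j = flatIdx n i' j') :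
    i = i' ∧ j = j' := by
  have hv : i.val * n + j.val = i'.val * n + j'.val := congrArg Fin.val h
  have h1 : i.val = i'.val := by
    rw [← dec_div1 i j, hv, dec_div1]
  have h2 : j.val = j'.val := by
    rw [h1] at hv; exact Nat.add_left_cancel hv
  exact ⟨Fin.ext h1, Fin.ext h2⟩

lemma eA_ne_eB {n : ℕ} (z : Fin (n ^ 3)) : eA n z ≠ eB n z := by
  intro h
  have hv := congrArg Fin.val h
  have hn := fin_pos3 z
  have h1 : z.val / n ^ 2 < n := Nat.div_lt_of_lt_mul (lt_of_lt_of_le z.isLt (le_of_eq (by ring)))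
  have h2 : z.val % n < n := Nat.mod_lt _ hn
  have hlt : (eA n z).val < n ^ 2 := by
    show (z.val / n ^ 2) * n + z.val % n < n ^ 2
    nlinarith
  have hge : n ^ 2 ≤ (eB n z).val := Nat.le_add_right _ _
  omega

lemma trip_bij (n : ℕ) :
    Function.Bijective (fun p : Fin n × Fin n × Fin n => tripIdx n p.2.1 p.2.2 p.1) := by
  rw [Fintype.bijective_iff_injective_and_card]
  constructor
  · intro p q h
    have hv : p.2.1.val * n ^ 2 + p.2.2.val * n + p.1.val
        = q.2.1.val * n ^ 2 + q.2.2.val * n + q.1.val := congrArg Fin.val h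
    have h1 : p.2.1.val = q.2.1.val := by
      rw [← dec_div2 p.2.1 p.2.2 p.1, hv, dec_div2]
    have h2 : p.2.2.val * n + p.1.val = q.2.2.val * n + q.1.val := by
      rw [← dec_mod2 p.2.1 p.2.2 p.1, hv, dec_mod2]
    have h3 : p.2.2.val = q.2.2.val := by
      rw [← dec_div1 p.2.2 p.1, h2, dec_div1]
    have h4 : p.1.val = q.1.val := by
      rw [h3] at h2; exact Nat.add_left_cancel h2
    exact Prod.ext (Fin.ext h4) (Prod.ext (Fin.ext h1) (Fin.ext h3))
  · simp; ring

/-- There is a two-layer ReLU network with 0/1 weights `W¹ ∈ {0,1}^{2n²×n³}`,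
`W² ∈ {0,1}^{n³×n²}` and bias `-𝟙` computing the product of two binary `n × n`
matrices from the concatenation of their row-major flattenings:
`ReLU(x·W¹ − 𝟙ᵀ)·W² = flat (A·B)`. -/
theorem two_layer_relu_binary_matrix_product (n : ℕ) (hn : 1 ≤ n) :
    ∃ (W1 : Matrix (Fin (2 * n ^ 2)) (Fin (n ^ 3)) ℝ)
      (W2 : Matrix (Fin (n ^ 3)) (Fin (n ^ 2)) ℝ),
      (∀ a b, W1 a b = 0 ∨ W1 a b = 1) ∧
      (∀ a b, W2 a b = 0 ∨ W2 a b = 1) ∧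
      ∀ A B : Matrix (Fin n) (Fin n) ℝ,
        (∀ i j, A i j = 0 ∨ A i j = 1) →
        (∀ i j, B i j = 0 ∨ B i j = 1) →
        ∀ x : Fin (2 * n ^ 2) → ℝ,
          (∀ i j : Fin n, x (catIdxA n i j) = A i j) →
          (∀ i j : Fin n, x (catIdxB n i j) = B i j) →
          ∀ i j : Fin n,
            (∑ z : Fin (n ^ 3),
                max ((∑ m : Fin (2 * n ^ 2), x m * W1 m z) - 1) 0 * W2 z (flatIdx n i j))
              = (A * B) i j := by
  refine ⟨(fun m z => (if m = eA n z then 1 else 0) + (if m = eB n z then 1 else 0)),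
    (fun z c => if c = fc n z then 1 else 0), ?_, ?_, ?_⟩
  · intro a b
    by_cases h1 : a = eA n b
    · right
      have h2 : a ≠ eB n b := h1 ▸ eA_ne_eB b
      simp [h1, h2, eA_ne_eB b]
    · by_cases h2 : a = eB n b
      · right; simp [h1, h2, (eA_ne_eB b).symm]
      · left; simp [h1, h2]
  · intro a b
    by_cases h : b = fc n a
    · right; simp [h]
    · left; simp [h]
  · intro A B hA hB x hxA hxB i j
    have hinner : ∀ z : Fin (n ^ 3),
        (∑ m : Fin (2 * n ^ 2), x m *
          ((if m = eA n z then (1:ℝ) else 0) + (if m = eB n z then 1 else 0)))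
        = x (eA n z) + x (eB n z) := by
      intro z
      simp [mul_add, mul_ite, mul_one, mul_zero, Finset.sum_add_distrib,
        Finset.sum_ite_eq']
    calc (∑ z : Fin (n ^ 3),
            max ((∑ m : Fin (2 * n ^ 2), x m *
              ((if m = eA n z then (1:ℝ) else 0) + (if m = eB n z then 1 else 0))) - 1) 0
            * (if flatIdx n i j = fc n z then 1 else 0))
        = ∑ p : Fin n × Fin n × Fin n,
            max ((∑ m : Fin (2 * n ^ 2), x m *
              ((if m = eA n (tripIdx n p.2.1 p.2.2 p.1) then (1:ℝ) else 0)
                + (if m = eB n (tripIdx n p.2.1 p.2.2 p.1) then 1 else 0))) - 1) 0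
            * (if flatIdx n i j = fc n (tripIdx n p.2.1 p.2.2 p.1) then 1 else 0) :=
          (Fintype.sum_bijective _ (trip_bij n) _ _ (fun p => rfl)).symm
      _ = ∑ k : Fin n, ∑ q : Fin n × Fin n,
            max ((x (eA n (tripIdx n q.1 q.2 k)) + x (eB n (tripIdx n q.1 q.2 k))) - 1) 0
            * (if flatIdx n i j = fc n (tripIdx n q.1 q.2 k) then 1 else 0) := by
          rw [Fintype.sum_prod_type]
          exact Finset.sum_congr rfl (fun k _ => Finset.sum_congr rfl (fun q _ => by
            rw [hinner]))
      _ = ∑ k : Fin n, ∑ q : Fin n × Fin n,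
            (if q = (i, j) then max (A q.1 k + B k q.2 - 1) 0 else 0) := by
          refine Finset.sum_congr rfl (fun k _ => Finset.sum_congr rfl (fun q _ => ?_))
          rw [eA_trip, eB_trip, fc_trip, hxA, hxB]
          by_cases h : q = (i, j)
          · have : flatIdx n i j = flatIdx n q.1 q.2 := by rw [h]
            simp [h, this]
          · have hne : flatIdx n i j ≠ flatIdx n q.1 q.2 := by
              intro he
              obtain ⟨h1, h2⟩ := flatIdx_inj he
              exact h (Prod.ext h1.symm h2.symm)
            simp [h, hne]
      _ = ∑ k : Fin n, max (A i k + B k j - 1) 0 := by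
          refine Finset.sum_congr rfl (fun k _ => ?_)
          rw [Finset.sum_ite_eq' Finset.univ (i, j)
            (fun q => max (A q.1 k + B k q.2 - 1) 0)]
          simp
      _ = ∑ k : Fin n, A i k * B k j := by
          refine Finset.sum_congr rfl (fun k _ => ?_)
          rcases hA i k with h | h <;> rcases hB k j with h' | h' <;>
            rw [h, h'] <;> norm_num
      _ = (A * B) i j := (Matrix.mul_apply).symm
end

section
/- With W¹ defined by W¹_{z,(i-1)n²+(j-1)n+k} = 1 iff z = (i-1)n+k or z = (n+k-1)n+j (else 0), for all binary matrices A, B ∈ {0,1}^{n×n}: ReLU(flat([A,B])·W¹ − 𝟙)_{(i-1)n²+(j-1)n+k} = A_{ik}·B_{kj} for all i,j,k ∈ {1,…,n}. -/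
open Classical

/-- The first-layer weight matrix: `W¹_{z,(i,j,k)} = 1` iff `z` indexes `A i k`
(in the first half) or `B k j` (in the second half) of the concatenated input. -/
noncomputable def W1 (n : ℕ) : Matrix (Fin (2 * n ^ 2)) (Fin (n ^ 3)) ℝ :=
  fun z p =>
    if ∃ i j k : Fin n, p = tripIdx n i j k ∧ (z = catIdxA n i k ∨ z = catIdxB n k j)
    then 1 else 0

lemma pair_inj (n : ℕ) {i j i' j' : Fin n}
    (h : i.val * n + j.val = i'.val * n + j'.val) : i = i' ∧ j = j' := by
  have hj := j.isLt; have hj' := j'.isLt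
  have hi : i.val = i'.val := by
    rcases Nat.lt_trichotomy i.val i'.val with h1 | h1 | h1
    · nlinarith
    · exact h1
    · nlinarith
  constructor
  · exact Fin.ext hi
  · apply Fin.ext; rw [hi] at h; omega

lemma tripIdx_inj (n : ℕ) {i j k i' j' k' : Fin n}
    (h : tripIdx n i j k = tripIdx n i' j' k') : i = i' ∧ j = j' ∧ k = k' := by
  have hv : i.val * n ^ 2 + j.val * n + k.val = i'.val * n ^ 2 + j'.val * n + k'.val := by
    simpa [tripIdx] using congrArg Fin.val h
  have hj := j.isLt; have hj' := j'.isLt; have hk := k.isLt; have hk' := k'.isLt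
  have hi : i.val = i'.val := by
    rcases Nat.lt_trichotomy i.val i'.val with h1 | h1 | h1
    · nlinarith
    · exact h1
    · nlinarith
  have h2 : j.val * n + k.val = j'.val * n + k'.val := by
    rw [hi] at hv; omega
  obtain ⟨e1, e2⟩ := pair_inj n h2
  exact ⟨Fin.ext hi, e1, e2⟩

/-- With `W¹` as above, the first ReLU layer computes all `n³` binary scalar
products: `ReLU(x·W¹ − 𝟙)_{(i,j,k)} = A i k * B k j` for binary matrices `A, B`. -/
theorem first_layer_computes_scalar_products (n : ℕ)
    (A B : Matrix (Fin n) (Fin n) ℝ)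
    (hA : ∀ i j, A i j = 0 ∨ A i j = 1)
    (hB : ∀ i j, B i j = 0 ∨ B i j = 1)
    (x : Fin (2 * n ^ 2) → ℝ)
    (hxA : ∀ i j : Fin n, x (catIdxA n i j) = A i j)
    (hxB : ∀ i j : Fin n, x (catIdxB n i j) = B i j) :
    ∀ i j k : Fin n,
      max ((∑ m : Fin (2 * n ^ 2), x m * W1 n m (tripIdx n i j k)) - 1) 0
        = A i k * B k j := by
  intro i j k
  set a := catIdxA n i k with ha
  set b := catIdxB n k j with hb
  have hab : a ≠ b := by
    intro h
    have := congrArg Fin.val h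
    simp only [ha, hb, catIdxA, catIdxB] at this
    have hi := i.isLt; have hk := k.isLt
    nlinarith
  have hW : ∀ m : Fin (2 * n ^ 2), W1 n m (tripIdx n i j k) = if m = a ∨ m = b then 1 else 0 := by
    intro m
    unfold W1
    congr 1
    simp only [eq_iff_iff]
    constructor
    · rintro ⟨i', j', k', hp, hz⟩
      obtain ⟨e1, e2, e3⟩ := tripIdx_inj n hp.symm
      subst e1; subst e2; subst e3
      exact hz
    · intro hz
      exact ⟨i, j, k, rfl, hz⟩
  have hsum : (∑ m : Fin (2 * n ^ 2), x m * W1 n m (tripIdx n i j k)) = x a + x b := by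
    rw [show (Finset.univ : Finset (Fin (2 * n ^ 2))) = insert a {b} ∪ (Finset.univ \ insert a {b}) by
      rw [Finset.union_sdiff_of_subset (Finset.subset_univ _)]]
    rw [Finset.sum_union (Finset.disjoint_sdiff)]
    rw [Finset.sum_insert (by simp [hab]), Finset.sum_singleton]
    have h1 : ∀ m ∈ Finset.univ \ insert a ({b} : Finset (Fin (2 * n ^ 2))),
        x m * W1 n m (tripIdx n i j k) = 0 := by
      intro m hm
      simp only [Finset.mem_sdiff, Finset.mem_insert, Finset.mem_singleton] at hm
      rw [hW m]
      have hm2 := hm.2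
      push_neg at hm2
      simp [hm2.1, hm2.2]
    rw [Finset.sum_eq_zero h1, hW a, hW b]
    simp [hab]
  rw [hsum, ha, hb, hxA, hxB]
  rcases hA i k with h1 | h1 <;> rcases hB k j with h2 | h2 <;> rw [h1, h2] <;> norm_num
end

section
/- For chunk size C ≥ 2 and sequence length T ≥ 1, after ⌈log_C T⌉ layers of the C-ary chunked combination scheme, the final output position aggregates all T inputs: formally, for an associative operation ⋆ with identity, defining o_i^{(0)} = s_i and o_i^{(ℓ)} = o_{i−(C−1)·C^{ℓ−1}}^{(ℓ−1)} ⋆ ⋯ ⋆ o_{i−C^{ℓ−1}}^{(ℓ−1)} ⋆ o_i^{(ℓ−1)} (with identity for out-of-range indices), o_{T−1}^{(⌈log_C T⌉)} = s_0 ⋆ ⋯ ⋆ s_{T−1}. -/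
/-!
Unfolding the recursion, layer `ℓ` at position `i` is the ordered product of the inputs over the
window `(i - C^ℓ, i]`: the `C` sub-windows of length `C^ℓ` at the offsets `i - k·C^ℓ` tile the
window of length `C^(ℓ+1)` from left to right. At layer `⌈log_C T⌉` the window ending at `T - 1`
has length `C^⌈log_C T⌉ ≥ T`, so it covers `[0, T)` and otherwise only negative positions, where
the inputs are the identity.
-/

/-- The `C`-ary chunked combination scheme on integer positions: layer `0`
reads the inputs, and layer `ℓ+1` at position `i` multiplies the layer-`ℓ`
outputs at positions `i − k·C^ℓ` for `k = C−1, …, 1, 0` in that order. -/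
def chunkCombine {S : Type*} [Monoid S] (C : ℕ) (s : ℤ → S) : ℕ → ℤ → S
  | 0, i => s i
  | ℓ + 1, i =>
    ((List.range C).map (fun t => chunkCombine C s ℓ (i - ((C - 1 - t : ℕ) : ℤ) * C ^ ℓ))).prod

def intervalProd {S : Type*} [Monoid S] (s : ℤ → S) (a : ℤ) (n : ℕ) : S :=
  ((List.range n).map fun j : ℕ => s (a + j)).prod

namespace intervalProd

variable {S : Type*} [Monoid S] (s : ℤ → S)

@[simp]
lemma one (a : ℤ) : intervalProd s a 1 = s a := by
  simp [intervalProd]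

lemma add (a : ℤ) (m n : ℕ) :
    intervalProd s a (m + n) = intervalProd s a m * intervalProd s (a + m) n := by
  simp [intervalProd, List.range_add, Function.comp_def, add_assoc]

lemma mul (a : ℤ) (m n : ℕ) :
    intervalProd s a (m * n) =
      ((List.range m).map fun t : ℕ => intervalProd s (a + (t * n : ℕ)) n).prod := by
  induction m with
  | zero => simp [intervalProd]
  | succ m ih => simp [Nat.succ_mul, add, ih, List.range_succ]

lemma eq_one_of_nonpos (a : ℤ) (n : ℕ) (hs : ∀ i : ℤ, i < 0 → s i = 1) (h : a + n ≤ 0) :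
    intervalProd s a n = 1 :=
  List.prod_eq_one <| by
    simp only [List.mem_map, List.mem_range, forall_exists_index, and_imp]
    rintro _ j hj rfl
    exact hs _ (by omega)

end intervalProd

lemma chunkCombine_eq_intervalProd {S : Type*} [Monoid S] (C : ℕ) (s : ℤ → S) (ℓ : ℕ) (i : ℤ) :
    chunkCombine C s ℓ i = intervalProd s (i + 1 - (C ^ ℓ : ℕ)) (C ^ ℓ) := by
  induction ℓ generalizing i with
  | zero => simp [chunkCombine]
  | succ ℓ ih =>
    rw [pow_succ' C ℓ, intervalProd.mul, chunkCombine]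
    refine congrArg List.prod (List.map_congr_left fun t ht => ?_)
    have htC : t < C := List.mem_range.mp ht
    rw [ih]
    congr 1
    push_cast [Nat.sub_sub, Nat.cast_sub (by omega : 1 + t ≤ C)]
    ring

theorem chunkCombine_aggregates_general {S : Type*} [Monoid S] (C T : ℕ)
    (hC : 2 ≤ C) (s : ℤ → S) (hs : ∀ i : ℤ, i < 0 → s i = 1) :
    chunkCombine C s (Nat.clog C T) ((T : ℤ) - 1)
      = ((List.range T).map (fun j => s (j : ℤ))).prod := by
  obtain ⟨pad, hpad⟩ : ∃ pad, C ^ Nat.clog C T = pad + T :=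
    ⟨_, (Nat.sub_add_cancel (Nat.le_pow_clog (by omega) T)).symm⟩
  rw [chunkCombine_eq_intervalProd, hpad, intervalProd.add,
    intervalProd.eq_one_of_nonpos s _ _ hs (by push_cast; omega), one_mul]
  simp [intervalProd, ← List.map_eq_flatMap, Function.comp_def]

/-- For chunk size `C ≥ 2` and sequence length `T ≥ 1`, after `⌈log_C T⌉`
layers the output at position `T − 1` aggregates all `T` inputs:
`o_{T−1}^{(⌈log_C T⌉)} = s_0 ⋆ ⋯ ⋆ s_{T−1}` (out-of-range inputs being the
identity). -/
theorem chunkCombine_aggregates {S : Type*} [Monoid S] (C T : ℕ)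
    (hC : 2 ≤ C) (hT : 1 ≤ T) (s : ℤ → S) (hs : ∀ i : ℤ, i < 0 → s i = 1) :
    chunkCombine C s (Nat.clog C T) ((T : ℤ) - 1)
      = ((List.range T).map (fun j => s (j : ℤ))).prod :=
  chunkCombine_aggregates_general C T hC s hs
end
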